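/- arXiv:1909.04997 — 4 statements merged into one kernel-verified Lean document; each statement's English description precedes it below -/
import Mathlib

section
/- Let 𝒞₁, …, 𝒞_{d+1} be finite families of convex bodies in ℝ^d, and let L be a convex body in ℝ^d. Assume that for every colorful selection C₁ ∈ 𝒞₁, …, C_{d+1} ∈ 𝒞_{d+1}, the intersection ⋂_{i=1}^{d+1} C_i contains a translate of L. Then there exists an index j such that the intersection ⋂_{C ∈ 𝒞_j} C contains a translate of L. -/
open MeasureTheory

/-- A convex body: a compact convex set with nonempty interior. -/
def IsConvexBody {d : ℕ} (K : Set (EuclideanSpace ℝ (Fin d))) : Prop :=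
  Convex ℝ K ∧ IsCompact K ∧ (interior K).Nonempty

/-!
Replacing each set `C` by its erosion `{t | L + t ⊆ C}`, which is again closed and convex, reduces
the statement to the colorful Helly theorem for points. For that, choose the colorful selection
whose intersection is farthest from the origin, and let `v` be its point nearest to the origin.
The open ball of radius `‖v‖` misses this intersection, so by Helly's theorem it already misses the
intersection of all colors but one, say `j`. Swapping the `j`-th set for any other member of its
family gives an intersection whose nearest point has norm at most `‖v‖`, and lies in the set of
the remaining colors; in a strictly convex norm this point must be `v`, so `v` lies in every member
of the `j`-th family.
-/

open Module Metric Set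

section Helly

variable {E : Type*} [NormedAddCommGroup E]

theorem IsClosed.exists_mem_norm_eq_infDist [ProperSpace E] {K : Set E} (hK : IsClosed K)
    (hne : K.Nonempty) : ∃ v ∈ K, ‖v‖ = infDist 0 K := by
  obtain ⟨v, hv, hdist⟩ := hK.exists_infDist_eq_dist hne 0
  exact ⟨v, hv, by rw [hdist, dist_zero_left]⟩

variable [NormedSpace ℝ E]

theorem Convex.eq_of_norm_le_of_disjoint_ball [StrictConvexSpace ℝ E] {K : Set E}
    (hK : Convex ℝ K) {r : ℝ} {v w : E} (hv : v ∈ K) (hw : w ∈ K) (hvr : ‖v‖ ≤ r)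
    (hwr : ‖w‖ ≤ r) (hdisj : Disjoint (ball 0 r) K) : v = w := by
  by_contra hne
  have hmid : (1 / 2 : ℝ) • v + (1 / 2 : ℝ) • w ∈ ball (0 : E) r := by
    rw [mem_ball_zero_iff]
    exact norm_combo_lt_of_ne hvr hwr hne (by norm_num) (by norm_num) (by norm_num)
  exact hdisj.ne_of_mem hmid (hK hv hw (by norm_num) (by norm_num) (by norm_num)) rfl

variable [FiniteDimensional ℝ E] {ι : Type*} [Fintype ι]

theorem Convex.exists_disjoint_biInter_ne {D : Set E} {C : ι → Set E}
    (hcard : finrank ℝ E + 1 ≤ Fintype.card ι) (hD : Convex ℝ D) (hC : ∀ i, Convex ℝ (C i))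
    (hne : (⋂ i, C i).Nonempty) (hdisj : Disjoint D (⋂ i, C i)) :
    ∃ j, Disjoint D (⋂ (i) (_ : i ≠ j), C i) := by
  classical
  by_contra! hall
  let F : Option ι → Set E := fun o => o.elim D C
  suffices hF : (⋂ o ∈ (Finset.univ : Finset (Option ι)), F o).Nonempty by
    obtain ⟨x, hx⟩ := hF
    simp only [Finset.mem_univ, iInter_true, mem_iInter] at hx
    exact hdisj.ne_of_mem (hx none) (mem_iInter.mpr fun i => hx (some i)) rfl
  refine Convex.helly_theorem' (𝕜 := ℝ) (fun o _ => ?_) fun I _ hI => ?_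
  · cases o with
    | none => exact hD
    | some i => exact hC i
  by_cases hnone : none ∈ I
  · obtain ⟨o, hoI⟩ : ∃ o, o ∉ I := by
      by_contra! hmem
      have := Finset.card_le_card (fun o _ => hmem o : Finset.univ ⊆ I)
      rw [Finset.card_univ, Fintype.card_option] at this
      omega
    obtain ⟨j, rfl⟩ := Option.ne_none_iff_exists'.mp (ne_of_mem_of_not_mem hnone hoI).symm
    obtain ⟨x, hxD, hxC⟩ := not_disjoint_iff.mp (hall j)
    refine ⟨x, mem_iInter₂.mpr fun o ho => ?_⟩
    cases o with
    | none => exact hxD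
    | some i => exact mem_iInter₂.mp hxC i (ne_of_mem_of_not_mem ho hoI ∘ congrArg some)
  · obtain ⟨x, hx⟩ := hne
    refine ⟨x, mem_iInter₂.mpr fun o ho => ?_⟩
    cases o with
    | none => exact absurd ho hnone
    | some i => exact mem_iInter.mp hx i

theorem Convex.colorful_helly [StrictConvexSpace ℝ E] {𝒞 : ι → Set (Set E)}
    (hcard : finrank ℝ E + 1 ≤ Fintype.card ι) (hfin : ∀ i, (𝒞 i).Finite)
    (hconv : ∀ i, ∀ S ∈ 𝒞 i, Convex ℝ S) (hclosed : ∀ i, ∀ S ∈ 𝒞 i, IsClosed S)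
    (h : ∀ σ : ι → Set E, (∀ i, σ i ∈ 𝒞 i) → (⋂ i, σ i).Nonempty) :
    ∃ j, (⋂₀ 𝒞 j).Nonempty := by
  classical
  by_cases hnonempty : ∀ i, (𝒞 i).Nonempty
  swap
  · obtain ⟨j, hj⟩ := not_forall.mp hnonempty
    exact ⟨j, by simp [not_nonempty_iff_eq_empty.mp hj]⟩
  obtain ⟨σ, hσ, hσmax⟩ := Set.exists_max_image _ (fun σ => infDist 0 (⋂ i, σ i))
    (Finite.pi hfin) (univ_pi_nonempty_iff.mpr hnonempty)
  have hnearest : ∀ τ ∈ pi univ 𝒞, ∃ v ∈ ⋂ i, τ i, ‖v‖ = infDist 0 (⋂ i, τ i) := fun τ hτ =>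
    (isClosed_iInter fun i => hclosed i _ (hτ i trivial)).exists_mem_norm_eq_infDist
      (h τ fun i => hτ i trivial)
  obtain ⟨v, hv, hvr⟩ := hnearest σ hσ
  obtain ⟨j, hj⟩ := Convex.exists_disjoint_biInter_ne hcard (convex_ball 0 _)
    (fun i => hconv i _ (hσ i trivial)) ⟨v, hv⟩ (disjoint_ball_infDist (x := (0 : E)))
  refine ⟨j, v, mem_sInter.mpr fun S hS => ?_⟩
  let τ := Function.update σ j S
  have hτ : τ ∈ pi univ 𝒞 := fun i _ => by
    rcases eq_or_ne i j with rfl | hij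
    · simpa [τ] using hS
    · simpa [τ, hij] using hσ i trivial
  obtain ⟨w, hw, hwr⟩ := hnearest τ hτ
  have hwS : w ∈ S := by simpa [τ] using mem_iInter.mp hw j
  have hwσ : w ∈ ⋂ (i) (_ : i ≠ j), σ i := mem_iInter₂.mpr fun i hij => by
    simpa [τ, hij] using mem_iInter.mp hw i
  have hvσ : v ∈ ⋂ (i) (_ : i ≠ j), σ i := mem_iInter₂.mpr fun i _ => mem_iInter.mp hv i
  have hvw := (convex_iInter₂ fun i _ => hconv i _ (hσ i trivial)).eq_of_norm_le_of_disjoint_ball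
    hvσ hwσ hvr.le (hwr.trans_le (hσmax τ hτ)) hj
  exact hvw ▸ hwS

end Helly

section Erosion

variable {E : Type*} [AddCommGroup E]

def erosion (L C : Set E) : Set E := {t | ∀ x ∈ L, x + t ∈ C}

theorem mem_erosion_iff_image_subset {L C : Set E} {t : E} :
    t ∈ erosion L C ↔ (fun x => x + t) '' L ⊆ C :=
  image_subset_iff.symm

theorem erosion_eq_biInter_preimage (L C : Set E) :
    erosion L C = ⋂ x ∈ L, (x + ·) ⁻¹' C := by
  ext t
  simp [erosion]

theorem Convex.erosion [Module ℝ E] (L : Set E) {C : Set E} (hC : Convex ℝ C) :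
    Convex ℝ (erosion L C) := by
  rw [erosion_eq_biInter_preimage]
  exact convex_iInter₂ fun x _ => hC.translate_preimage_right x

theorem IsClosed.erosion [TopologicalSpace E] [ContinuousAdd E] (L : Set E) {C : Set E}
    (hC : IsClosed C) : IsClosed (erosion L C) := by
  rw [erosion_eq_biInter_preimage]
  exact isClosed_biInter fun x _ => hC.preimage (continuous_const_add x)

end Erosion

theorem colorful_helly_translates_general {d : ℕ}
    (𝒞 : Fin (d + 1) → Finset (Set (EuclideanSpace ℝ (Fin d))))
    (hbody : ∀ i, ∀ S ∈ 𝒞 i, IsConvexBody S)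
    (L : Set (EuclideanSpace ℝ (Fin d)))
    (h : ∀ C : Fin (d + 1) → Set (EuclideanSpace ℝ (Fin d)),
      (∀ i, C i ∈ 𝒞 i) →
      ∃ t : EuclideanSpace ℝ (Fin d), (fun x => x + t) '' L ⊆ ⋂ i, C i) :
    ∃ j, ∃ t : EuclideanSpace ℝ (Fin d), (fun x => x + t) '' L ⊆ ⋂ S ∈ 𝒞 j, S := by
  have hcard : finrank ℝ (EuclideanSpace ℝ (Fin d)) + 1 ≤ Fintype.card (Fin (d + 1)) := by
    simp
  obtain ⟨j, t, ht⟩ := Convex.colorful_helly (𝒞 := fun i => erosion L '' ↑(𝒞 i)) hcard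
    (fun i => (𝒞 i).finite_toSet.image _)
    (fun i _ ⟨S, hS, hSt⟩ => hSt ▸ (hbody i S hS).1.erosion L)
    (fun i _ ⟨S, hS, hSt⟩ => hSt ▸ (hbody i S hS).2.1.isClosed.erosion L) fun σ hσ => by
      choose S hS hSσ using hσ
      obtain ⟨t, ht⟩ := h S hS
      exact ⟨t, mem_iInter.mpr fun i => hSσ i ▸ mem_erosion_iff_image_subset.mpr
        (ht.trans (iInter_subset S i))⟩
  rw [sInter_image] at ht
  refine ⟨j, t, subset_iInter₂ fun S hS => mem_erosion_iff_image_subset.mp ?_⟩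
  exact mem_iInter₂.mp ht S hS

/-- Colorful Helly Theorem for translates of a fixed convex body. -/
theorem colorful_helly_translates {d : ℕ}
    (𝒞 : Fin (d + 1) → Finset (Set (EuclideanSpace ℝ (Fin d))))
    (hbody : ∀ i, ∀ S ∈ 𝒞 i, IsConvexBody S)
    (L : Set (EuclideanSpace ℝ (Fin d))) (hL : IsConvexBody L)
    (h : ∀ C : Fin (d + 1) → Set (EuclideanSpace ℝ (Fin d)),
      (∀ i, C i ∈ 𝒞 i) →
      ∃ t : EuclideanSpace ℝ (Fin d), (fun x => x + t) '' L ⊆ ⋂ i, C i) :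
    ∃ j, ∃ t : EuclideanSpace ℝ (Fin d), (fun x => x + t) '' L ⊆ ⋂ S ∈ 𝒞 j, S :=
  colorful_helly_translates_general 𝒞 hbody L h
end

section
/- Let C be a convex set in ℝ^d such that the closed Euclidean unit ball B^d is the ellipsoid of largest volume contained in C. Let E ⊆ C be an ellipsoid of volume at least δ · ω_d, where 0 < δ < 1 and ω_d = Vol(B^d). Then E contains a translate of the ball (δ / d^{d−1}) · B^d. -/
/-!
Write `E = p + Q(diag σ)(B^d)` with `Q` orthogonal and semi-axes `σ i > 0` (singular value
decomposition). By convexity of `C`, for `t ∈ [0, 1]` the set `(1 - t) B^d + t E` is again an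
ellipsoid in `C`, with semi-axes `1 + t (σ i - 1)`; maximality of `B^d` bounds its volume ratio
`∏ i, (1 + t (σ i - 1))` by `1`. This product equals `1` at `t = 0`, so its derivative
`∑ i, (σ i - 1)` there is nonpositive, i.e. `∑ i, σ i ≤ d`, whence every `σ i ≤ d`. Since
`δ ≤ ∏ i, σ i`, each semi-axis is at least `δ / d^(d-1)`, and `E` contains the ball of that
radius around its centre.
-/

open MeasureTheory

/-- An ellipsoid in `ℝ^d`: the image of the closed Euclidean unit ball under an
invertible affine map. -/
def IsEllipsoid {d : ℕ} (E : Set (EuclideanSpace ℝ (Fin d))) : Prop :=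
  ∃ L : EuclideanSpace ℝ (Fin d) ≃ᵃ[ℝ] EuclideanSpace ℝ (Fin d),
    E = L '' Metric.closedBall 0 1

open Set Metric Pointwise

section DiagonalMap

variable {ι : Type*} [Fintype ι] [DecidableEq ι]

noncomputable def diagonalMap (r : ι → ℝ) : EuclideanSpace ℝ ι →ₗ[ℝ] EuclideanSpace ℝ ι :=
  Matrix.toEuclideanLin (Matrix.diagonal r)

@[simp] lemma diagonalMap_apply (r : ι → ℝ) (x : EuclideanSpace ℝ ι) (i : ι) :
    diagonalMap r x i = r i * x i := by
  simp [diagonalMap, Matrix.toLpLin_apply, Matrix.mulVec_diagonal]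

lemma det_diagonalMap (r : ι → ℝ) : LinearMap.det (diagonalMap r) = ∏ i, r i := by
  rw [diagonalMap, LinearMap.det_toLpLin, Matrix.det_diagonal]

lemma diagonalMap_inv_diagonalMap {r : ι → ℝ} (hr : ∀ i, r i ≠ 0) (x : EuclideanSpace ℝ ι) :
    diagonalMap r⁻¹ (diagonalMap r x) = x := by
  ext i; simp [hr]

lemma diagonalMap_diagonalMap_inv {r : ι → ℝ} (hr : ∀ i, r i ≠ 0) (x : EuclideanSpace ℝ ι) :
    diagonalMap r (diagonalMap r⁻¹ x) = x := by
  ext i; simp [hr]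

lemma norm_diagonalMap_le {r : ι → ℝ} {c : ℝ} (hc : 0 ≤ c) (hr : ∀ i, |r i| ≤ c)
    (x : EuclideanSpace ℝ ι) : ‖diagonalMap r x‖ ≤ c * ‖x‖ := by
  rw [← sq_le_sq₀ (norm_nonneg _) (by positivity), mul_pow, EuclideanSpace.norm_sq_eq,
    EuclideanSpace.norm_sq_eq, Finset.mul_sum]
  gcongr with i
  rw [diagonalMap_apply, norm_mul, mul_pow, Real.norm_eq_abs]
  gcongr
  exact hr i

end DiagonalMap

section SingularValues

variable {E F : Type*} [NormedAddCommGroup E] [InnerProductSpace ℝ E] [FiniteDimensional ℝ E]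
  [NormedAddCommGroup F] [InnerProductSpace ℝ F] [FiniteDimensional ℝ F]

lemma LinearMap.norm_sq_apply_eq_sum_eigenvalues (g : E →ₗ[ℝ] F) {n : ℕ}
    (hn : Module.finrank ℝ E = n) (v : E) :
    ‖g v‖ ^ 2 = ∑ i, g.isSymmetric_adjoint_comp_self.eigenvalues hn i *
      (g.isSymmetric_adjoint_comp_self.eigenvectorBasis hn).repr v i ^ 2 := by
  set hT := g.isSymmetric_adjoint_comp_self
  rw [← real_inner_self_eq_norm_sq, ← LinearMap.adjoint_inner_left, ← LinearMap.comp_apply,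
    ← (hT.eigenvectorBasis hn).repr.inner_map_map, PiLp.inner_apply]
  refine Finset.sum_congr rfl fun i _ => ?_
  rw [hT.eigenvectorBasis_apply_self_apply]
  simp only [RCLike.inner_apply, conj_trivial, RCLike.ofReal_real_eq_id, id_eq]
  ring

theorem LinearEquiv.exists_eq_comp_diagonalMap_comp {n : ℕ} (hn : Module.finrank ℝ E = n)
    (g : E ≃ₗ[ℝ] F) :
    ∃ (P : E ≃ₗᵢ[ℝ] EuclideanSpace ℝ (Fin n)) (Q : EuclideanSpace ℝ (Fin n) ≃ₗᵢ[ℝ] F)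
      (σ : Fin n → ℝ), (∀ i, 0 < σ i) ∧ ∀ x, g x = Q (diagonalMap σ (P x)) := by
  set T : E →ₗ[ℝ] F := g.toLinearMap
  set b := T.isSymmetric_adjoint_comp_self.eigenvectorBasis hn
  set μ := T.isSymmetric_adjoint_comp_self.eigenvalues hn
  have hnorm : ∀ v, ‖T v‖ ^ 2 = ∑ i, μ i * b.repr v i ^ 2 :=
    T.norm_sq_apply_eq_sum_eigenvalues hn
  have hμ : ∀ i, 0 < μ i := fun i => by
    have hgb : 0 < ‖T (b i)‖ := norm_pos_iff.2 <| g.map_ne_zero_iff.2 (b.orthonormal.ne_zero i)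
    simpa [hnorm, b.repr_self, PiLp.single_apply] using pow_pos hgb 2
  set σ := fun i => √(μ i)
  have hσ : ∀ i, 0 < σ i := fun i => Real.sqrt_pos.2 (hμ i)
  -- `g` maps the eigenbasis `b` of `g† g` to orthogonal vectors of lengths `σ i`.
  let W : EuclideanSpace ℝ (Fin n) →ₗ[ℝ] F :=
    T ∘ₗ (b.repr.symm : EuclideanSpace ℝ (Fin n) →ₗ[ℝ] E) ∘ₗ diagonalMap σ⁻¹
  have hW : ∀ y, ‖W y‖ = ‖y‖ := fun y => by
    refine (sq_eq_sq₀ (norm_nonneg _) (norm_nonneg _)).1 ?_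
    rw [LinearMap.comp_apply, hnorm, EuclideanSpace.norm_sq_eq]
    refine Finset.sum_congr rfl fun i _ => ?_
    simp [σ, mul_pow, Real.sq_sqrt (hμ i).le, (hμ i).ne']
  have hdim : Module.finrank ℝ (EuclideanSpace ℝ (Fin n)) = Module.finrank ℝ F := by
    rw [finrank_euclideanSpace_fin, ← hn, g.finrank_eq]
  refine ⟨b.repr, LinearIsometry.toLinearIsometryEquiv ⟨W, hW⟩ hdim, σ, hσ, fun x => ?_⟩
  simp [W, T, diagonalMap_inv_diagonalMap fun i => (hσ i).ne']

end SingularValues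

section Products

variable {ι : Type*} [Fintype ι] {σ : ι → ℝ}

lemma sum_le_card_of_prod_le_one (h : ∀ t ∈ Icc (0 : ℝ) 1, ∏ i, (1 + t * (σ i - 1)) ≤ 1) :
    ∑ i, σ i ≤ Fintype.card ι := by
  classical
  have hderiv : HasDerivAt (fun t => ∏ i, (1 + t * (σ i - 1))) (∑ i, (σ i - 1)) 0 := by
    simpa using HasDerivAt.fun_finsetProd (u := Finset.univ) (x := (0 : ℝ))
      (f := fun i t => 1 + t * (σ i - 1)) fun i _ =>
        ((hasDerivAt_id 0).mul_const (σ i - 1)).const_add 1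
  have hmax : IsLocalMaxOn (fun t => ∏ i, (1 + t * (σ i - 1))) (Icc 0 1) 0 :=
    Filter.eventually_of_mem self_mem_nhdsWithin fun t ht => by simpa using h t ht
  have hcone : (1 : ℝ) ∈ posTangentConeAt (Icc 0 1) 0 :=
    mem_posTangentConeAt_of_segment_subset (by simp [segment_eq_Icc])
  simpa using hmax.hasFDerivWithinAt_nonpos hderiv.hasFDerivAt.hasFDerivWithinAt hcone

lemma div_pow_le_of_le_prod {δ M : ℝ} (hσ : ∀ i, 0 < σ i) (hM : ∀ i, σ i ≤ M)
    (hδ : δ ≤ ∏ i, σ i) (j : ι) : δ / M ^ (Fintype.card ι - 1) ≤ σ j := by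
  classical
  rw [div_le_iff₀ (pow_pos ((hσ j).trans_le (hM j)) _)]
  calc δ ≤ ∏ i, σ i := hδ
    _ = σ j * ∏ i ∈ Finset.univ.erase j, σ i :=
      (Finset.mul_prod_erase _ _ (Finset.mem_univ j)).symm
    _ ≤ σ j * M ^ (Fintype.card ι - 1) := by
      rw [← Finset.card_univ, ← Finset.card_erase_of_mem (Finset.mem_univ j)]
      exact mul_le_mul_of_nonneg_left ((Finset.prod_le_prod (fun i _ => (hσ i).le)
        fun i _ => hM i).trans_eq (Finset.prod_const M)) (hσ j).le

end Products

lemma le_of_ofReal_mul_volume_closedBall_le {ι : Type*} [Fintype ι] {a b : ℝ} (hb : 0 ≤ b)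
    (h : ENNReal.ofReal a * volume (closedBall (0 : EuclideanSpace ℝ ι) 1) ≤
      ENNReal.ofReal b * volume (closedBall (0 : EuclideanSpace ℝ ι) 1)) : a ≤ b :=
  (ENNReal.ofReal_le_ofReal_iff hb).1 <| (ENNReal.mul_le_mul_iff_left
    (measure_closedBall_pos volume 0 one_pos).ne' measure_closedBall_lt_top.ne).1 h

section Ellipsoid

variable {ι : Type*} [Fintype ι] [DecidableEq ι]

def ellipsoid (p : EuclideanSpace ℝ ι) (Q : EuclideanSpace ℝ ι ≃ₗᵢ[ℝ] EuclideanSpace ℝ ι)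
    (r : ι → ℝ) : Set (EuclideanSpace ℝ ι) :=
  (fun x => p + Q (diagonalMap r x)) '' closedBall 0 1

variable {p : EuclideanSpace ℝ ι} {Q : EuclideanSpace ℝ ι ≃ₗᵢ[ℝ] EuclideanSpace ℝ ι} {r : ι → ℝ}

lemma volume_ellipsoid : volume (ellipsoid p Q r) =
    ENNReal.ofReal |∏ i, r i| * volume (closedBall (0 : EuclideanSpace ℝ ι) 1) := by
  have : ellipsoid p Q r = p +ᵥ (Q.symm ⁻¹' (diagonalMap r '' closedBall 0 1)) := by
    rw [ellipsoid, ← Q.image_eq_preimage_symm, ← image_vadd, image_image, image_image]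
    rfl
  rw [this, measure_vadd, Q.symm.measurePreserving.measure_preimage_emb
    Q.symm.toMeasurableEquiv.measurableEmbedding, Measure.addHaar_image_linearMap,
    det_diagonalMap]

lemma closedBall_subset_ellipsoid {ρ : ℝ} (hρ : 0 < ρ) (hr : ∀ i, ρ ≤ r i) :
    closedBall p ρ ⊆ ellipsoid p Q r := by
  have hr0 : ∀ i, r i ≠ 0 := fun i => (hρ.trans_le (hr i)).ne'
  intro y hy
  refine ⟨diagonalMap r⁻¹ (Q.symm (y - p)), ?_, by simp [diagonalMap_diagonalMap_inv hr0]⟩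
  have hinv : ∀ i, |(r⁻¹) i| ≤ ρ⁻¹ := fun i => by
    rw [Pi.inv_apply, abs_inv, abs_of_pos (hρ.trans_le (hr i))]
    exact inv_anti₀ hρ (hr i)
  rw [mem_closedBall_zero_iff]
  calc ‖diagonalMap r⁻¹ (Q.symm (y - p))‖ ≤ ρ⁻¹ * ‖Q.symm (y - p)‖ :=
        norm_diagonalMap_le (inv_nonneg.2 hρ.le) hinv _
    _ ≤ ρ⁻¹ * ρ := by rw [LinearIsometryEquiv.norm_map, ← dist_eq_norm]; gcongr; exact hy
    _ = 1 := inv_mul_cancel₀ hρ.ne'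

lemma Convex.ellipsoid_interpolate_subset {C : Set (EuclideanSpace ℝ ι)} (hC : Convex ℝ C)
    (hB : closedBall 0 1 ⊆ C) (hE : ellipsoid p Q r ⊆ C) {t : ℝ} (ht : t ∈ Icc 0 1) :
    ellipsoid (t • p) Q (fun i => 1 + t * (r i - 1)) ⊆ C := by
  rintro _ ⟨x, hx, rfl⟩
  have hD : diagonalMap (fun i => 1 + t * (r i - 1)) x = (1 - t) • x + t • diagonalMap r x := by
    ext i
    simp only [diagonalMap_apply, PiLp.add_apply, PiLp.smul_apply, smul_eq_mul]
    ring
  have hcomb : t • p + Q (diagonalMap (fun i => 1 + t * (r i - 1)) x) =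
      (1 - t) • Q x + t • (p + Q (diagonalMap r x)) := by
    rw [hD, map_add, map_smul, map_smul]
    module
  simp only [hcomb]
  exact hC (hB (by simpa using hx)) (hE ⟨x, hx, rfl⟩) (by linarith [ht.2]) ht.1 (by ring)

end Ellipsoid

lemma isEllipsoid_ellipsoid {d : ℕ} {p : EuclideanSpace ℝ (Fin d)}
    {Q : EuclideanSpace ℝ (Fin d) ≃ₗᵢ[ℝ] EuclideanSpace ℝ (Fin d)} {r : Fin d → ℝ}
    (hr : ∀ i, r i ≠ 0) : IsEllipsoid (ellipsoid p Q r) := by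
  have hdet : LinearMap.det (diagonalMap r) ≠ 0 := by
    rw [det_diagonalMap]; exact Finset.prod_ne_zero_iff.2 fun i _ => hr i
  refine ⟨(((diagonalMap r).equivOfDetNeZero hdet).trans Q.toLinearEquiv).toAffineEquiv.trans
    (AffineEquiv.constVAdd ℝ _ p), ?_⟩
  simp [ellipsoid]

lemma IsEllipsoid.exists_eq_ellipsoid {d : ℕ} {E : Set (EuclideanSpace ℝ (Fin d))}
    (hE : IsEllipsoid E) : ∃ p Q, ∃ σ : Fin d → ℝ, (∀ i, 0 < σ i) ∧ E = ellipsoid p Q σ := by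
  obtain ⟨L, rfl⟩ := hE
  obtain ⟨P, Q, σ, hσ, hL⟩ := L.linear.exists_eq_comp_diagonalMap_comp finrank_euclideanSpace_fin
  refine ⟨L 0, Q, σ, hσ, ?_⟩
  have hLP : ∀ x, L 0 + Q (diagonalMap σ (P x)) = L x := fun x => by
    rw [← hL, add_comm]
    exact (congrFun L.toAffineMap.decomp x).symm
  have hPB : P '' closedBall 0 1 = closedBall 0 1 := by
    rw [P.image_closedBall, map_zero]
  calc L '' closedBall 0 1 = (fun x => L 0 + Q (diagonalMap σ x)) '' (P '' closedBall 0 1) := by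
        rw [image_image]; exact (image_congr fun x _ => hLP x).symm
    _ = ellipsoid (L 0) Q σ := by rw [hPB, ellipsoid]

theorem ellipsoid_contains_small_ball_general {d : ℕ}
    (C : Set (EuclideanSpace ℝ (Fin d))) (hC : Convex ℝ C)
    (hball : Metric.closedBall (0 : EuclideanSpace ℝ (Fin d)) 1 ⊆ C)
    (hmax : ∀ F, IsEllipsoid F → F ⊆ C →
      volume F ≤ volume (Metric.closedBall (0 : EuclideanSpace ℝ (Fin d)) 1))
    (δ : ℝ) (hδ0 : 0 < δ)
    (E : Set (EuclideanSpace ℝ (Fin d))) (hE : IsEllipsoid E) (hEC : E ⊆ C)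
    (hvol : ENNReal.ofReal δ *
        volume (Metric.closedBall (0 : EuclideanSpace ℝ (Fin d)) 1) ≤ volume E) :
    ∃ t : EuclideanSpace ℝ (Fin d),
      Metric.closedBall t (δ / (d : ℝ) ^ (d - 1)) ⊆ E := by
  obtain ⟨p, Q, σ, hσ, rfl⟩ := hE.exists_eq_ellipsoid
  have hprod : ∀ t ∈ Icc (0 : ℝ) 1, ∏ i, (1 + t * (σ i - 1)) ≤ 1 := fun t ht => by
    have hpos : ∀ i, 0 < 1 + t * (σ i - 1) := fun i => by
      rcases ht.2.eq_or_lt with rfl | ht1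
      · simpa using hσ i
      · nlinarith [mul_nonneg ht.1 (hσ i).le]
    have hF := hmax _ (isEllipsoid_ellipsoid fun i => (hpos i).ne')
      (hC.ellipsoid_interpolate_subset hball hEC ht)
    rw [volume_ellipsoid] at hF
    exact (le_abs_self _).trans <| le_of_ofReal_mul_volume_closedBall_le zero_le_one <|
      hF.trans_eq (by rw [ENNReal.ofReal_one, one_mul])
  have hσd : ∀ i, σ i ≤ d := fun i =>
    (Finset.single_le_sum (fun j _ => (hσ j).le) (Finset.mem_univ i)).trans
      (by simpa using sum_le_card_of_prod_le_one hprod)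
  have hδσ : δ ≤ ∏ i, σ i := by
    rw [volume_ellipsoid, abs_of_pos (Finset.prod_pos fun i _ => hσ i)] at hvol
    exact le_of_ofReal_mul_volume_closedBall_le (Finset.prod_pos fun i _ => hσ i).le hvol
  have hρ : 0 < δ / (d : ℝ) ^ (d - 1) := by
    rcases d.eq_zero_or_pos with rfl | hd
    · simpa using hδ0
    · positivity
  exact ⟨p, closedBall_subset_ellipsoid hρ fun j => by
    simpa using div_pow_le_of_le_prod hσ hσd hδσ j⟩

/-- If `B^d` is the largest-volume ellipsoid contained in a convex set `C`, then
any ellipsoid `E ⊆ C` of volume at least `δ · ω_d` contains a translate of the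
ball `(δ / d^(d-1)) · B^d`. -/
theorem ellipsoid_contains_small_ball {d : ℕ}
    (C : Set (EuclideanSpace ℝ (Fin d))) (hC : Convex ℝ C)
    (hball : Metric.closedBall (0 : EuclideanSpace ℝ (Fin d)) 1 ⊆ C)
    (hmax : ∀ F, IsEllipsoid F → F ⊆ C →
      volume F ≤ volume (Metric.closedBall (0 : EuclideanSpace ℝ (Fin d)) 1))
    (δ : ℝ) (hδ0 : 0 < δ) (hδ1 : δ < 1)
    (E : Set (EuclideanSpace ℝ (Fin d))) (hE : IsEllipsoid E) (hEC : E ⊆ C)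
    (hvol : ENNReal.ofReal δ *
        volume (Metric.closedBall (0 : EuclideanSpace ℝ (Fin d)) 1) ≤ volume E) :
    ∃ t : EuclideanSpace ℝ (Fin d),
      Metric.closedBall t (δ / (d : ℝ) ^ (d - 1)) ⊆ E :=
  ellipsoid_contains_small_ball_general C hC hball hmax δ hδ0 E hE hEC hvol
end

section
/- Let 𝒞₁, …, 𝒞_{d+1} be finite families of convex bodies in ℝ^d, and assume that for every colorful selection C₁ ∈ 𝒞₁, …, C_{d+1} ∈ 𝒞_{d+1}, the intersection ⋂_{i=1}^{d+1} C_i is nonempty. Then there exists an index j such that the intersection ⋂_{C ∈ 𝒞_j} C is nonempty. -/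
open MeasureTheory

/-!
Among all colorful selections `T` choose one for which the minimum of `‖·‖²` over `⋂ i, T i` is
largest, and let `x` be the minimizer, unique by strict convexity. Helly's theorem, applied to the
sets `T i` together with the convex sublevel set `{y | ‖y‖² < ‖x‖²}`, shows that `x` already
minimizes `‖·‖²` over the intersection of all the `T i` but one, say `T k`. Replacing `T k` by any
`D ∈ 𝒞 k` cannot raise the minimum, so the minimizer is still `x`, whence `x ∈ D`.
-/

open Set Module

theorem strictConvexOn_univ_norm_sq {E : Type*} [NormedAddCommGroup E] [InnerProductSpace ℝ E] :
    StrictConvexOn ℝ univ (fun x : E ↦ ‖x‖ ^ 2) :=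
  (strongConvexOn_iff_convex (m := 2).2 <| by
    simpa using convexOn_const (0 : ℝ) convex_univ).strictConvexOn two_pos

theorem IsMinOn.exists_isMinOn_iInter_ne {ι E : Type*} [Fintype ι] [AddCommGroup E] [Module ℝ E]
    [FiniteDimensional ℝ E] (hcard : finrank ℝ E + 1 ≤ Fintype.card ι) {K : ι → Set E}
    (hK : ∀ i, Convex ℝ (K i)) {f : E → ℝ} (hf : ConvexOn ℝ univ f) {x : E}
    (hx : x ∈ ⋂ i, K i) (hmin : IsMinOn f (⋂ i, K i) x) :
    ∃ k, IsMinOn f (⋂ (i) (_ : i ≠ k), K i) x := by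
  by_contra! hnot
  have hy : ∀ k, ∃ y ∈ ⋂ (i) (_ : i ≠ k), K i, f y < f x := by
    intro k
    simpa [isMinOn_iff] using hnot k
  choose y hyK hyf using hy
  let F : Option ι → Set E := fun o ↦ o.elim {y | f y < f x} K
  have hF : ∀ o, Convex ℝ (F o) := by
    rintro (_ | i)
    · simpa [F] using hf.convex_lt (f x)
    · exact hK i
  obtain ⟨z, hz⟩ := Convex.helly_theorem' (s := Finset.univ) (fun o _ ↦ hF o) <| by
    intro I _ hI
    obtain ⟨o, ho⟩ : ∃ o, o ∉ I := by
      by_contra! hall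
      rw [Finset.eq_univ_of_forall hall, Finset.card_univ, Fintype.card_option] at hI
      omega
    refine ⟨o.elim x y, mem_iInter₂.2 ?_⟩
    rintro (_ | i) hi <;> rcases o with _ | k
    · exact absurd hi ho
    · exact hyf k
    · exact mem_iInter.1 hx i
    · exact mem_iInter₂.1 (hyK k) i (by rintro rfl; exact ho hi)
  simp only [Finset.mem_univ, iInter_true, mem_iInter] at hz
  exact (hz none).not_ge (isMinOn_iff.1 hmin z (mem_iInter.2 fun i ↦ hz (some i)))

theorem Convex.colorful_helly_theorem_compact {ι E : Type*} [Fintype ι]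
    [NormedAddCommGroup E] [InnerProductSpace ℝ E] [FiniteDimensional ℝ E]
    (hcard : finrank ℝ E + 1 ≤ Fintype.card ι) (𝒞 : ι → Finset (Set E))
    (hconv : ∀ i, ∀ S ∈ 𝒞 i, Convex ℝ S) (hcomp : ∀ i, ∀ S ∈ 𝒞 i, IsCompact S)
    (h : ∀ C : ι → Set E, (∀ i, C i ∈ 𝒞 i) → (⋂ i, C i).Nonempty) :
    ∃ j, (⋂ S ∈ 𝒞 j, S).Nonempty := by
  classical
  by_cases hne : ∀ i, (𝒞 i).Nonempty
  swap
  · obtain ⟨j, hj⟩ := not_forall.1 hne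
    exact ⟨j, by simp [Finset.not_nonempty_iff_eq_empty.1 hj]⟩
  obtain ⟨i₀⟩ : Nonempty ι := Fintype.card_pos_iff.1 (by omega)
  have : Nonempty (∀ i, 𝒞 i) := ⟨fun i ↦ (hne i).coe_sort.some⟩
  have hf := strictConvexOn_univ_norm_sq (E := E)
  have hmin (T : ∀ i, 𝒞 i) : ∃ x ∈ ⋂ i, (T i : Set E), IsMinOn (‖·‖ ^ 2) (⋂ i, (T i : Set E)) x :=
    ((hcomp i₀ _ (T i₀).2).of_isClosed_subset (isClosed_iInter fun i ↦ (hcomp i _ (T i).2).isClosed)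
      (iInter_subset _ i₀)).exists_isMinOn (h _ fun i ↦ (T i).2) (by fun_prop)
  choose x hx hxmin using hmin
  obtain ⟨T, hT⟩ := Finite.exists_max fun T ↦ ‖x T‖ ^ 2
  obtain ⟨k, hk⟩ := (hxmin T).exists_isMinOn_iInter_ne hcard (fun i ↦ hconv i _ (T i).2)
    hf.convexOn (hx T)
  refine ⟨k, x T, mem_iInter₂.2 fun D hD ↦ ?_⟩
  let T' := Function.update T k ⟨D, hD⟩
  have hx' : x T' ∈ ⋂ (i) (_ : i ≠ k), (T i : Set E) := mem_iInter₂.2 fun i hik ↦ by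
    simpa [T', Function.update_of_ne hik] using mem_iInter.1 (hx T') i
  have hxT : x T ∈ ⋂ (i) (_ : i ≠ k), (T i : Set E) := mem_iInter₂.2 fun i _ ↦ mem_iInter.1 (hx T) i
  have hsame : x T = x T' :=
    (hf.subset (subset_univ _) (convex_iInter₂ fun i _ ↦ hconv i _ (T i).2)).eq_of_isMinOn hk
      (fun z hz ↦ (hT T').trans (hk hz)) hxT hx'
  simpa [hsame, T'] using mem_iInter.1 (hx T') k

/-- Colorful Helly Theorem (Lovász, Bárány). -/
theorem colorful_helly {d : ℕ}
    (𝒞 : Fin (d + 1) → Finset (Set (EuclideanSpace ℝ (Fin d))))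
    (hbody : ∀ i, ∀ S ∈ 𝒞 i, IsConvexBody S)
    (h : ∀ C : Fin (d + 1) → Set (EuclideanSpace ℝ (Fin d)),
      (∀ i, C i ∈ 𝒞 i) → (⋂ i, C i).Nonempty) :
    ∃ j, (⋂ S ∈ 𝒞 j, S).Nonempty :=
  Convex.colorful_helly_theorem_compact (by simp) 𝒞 (fun i S hS ↦ (hbody i S hS).1)
    (fun i S hS ↦ (hbody i S hS).2.1) h
end

section
/- For every convex body K in ℝ^d, there exists an ellipsoid E ⊆ K with Vol(E) ≥ d^{−d} · Vol(K). -/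
/-!
Let `x ↦ A x + p` maximize `det A` among the affine maps sending the closed unit ball `B` into
`K` (compactness). Normalizing so that the maximizer is the identity, `B ⊆ K`; if some `x ∈ K` had
`‖x‖ > d`, convexity puts `conv (B ∪ {x}) ⊆ K`, and this cone contains an ellipsoid that is
stretched by `a` along `x` and shrunk by `√(1 - ε)` across it, with `a * √(1 - ε) ^ (d - 1) > 1`,
contradicting maximality. Hence `K` lies in the `d`-fold dilate of the maximal ellipsoid, whose
volume is `d ^ d` times larger.
-/

open MeasureTheory

open Module Metric Set
open scoped RealInnerProductSpace

section Determinant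

variable {𝕜 E : Type*} [RCLike 𝕜] [NormedAddCommGroup E] [InnerProductSpace 𝕜 E]
  [FiniteDimensional 𝕜 E]

theorem Submodule.det_smul_starProjection_add_smul_starProjection_orthogonal
    (K : Submodule 𝕜 E) (a b : 𝕜) :
    LinearMap.det ((a • K.starProjection + b • Kᗮ.starProjection : E →L[𝕜] E) : E →ₗ[𝕜] E) =
      a ^ finrank 𝕜 K * b ^ finrank 𝕜 Kᗮ := by
  have hK : ∀ v : Kᗮ, K.starProjection v = 0 := fun v ↦
    K.starProjection_apply_eq_zero_iff.mpr v.2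
  let e := K.prodEquivOfIsCompl _ K.isCompl_orthogonal
  let β := (finBasis 𝕜 K).prod (finBasis 𝕜 Kᗮ)
  have : LinearMap.toMatrix β β (e.symm ∘ₗ
      ((a • K.starProjection + b • Kᗮ.starProjection : E →L[𝕜] E) : E →ₗ[𝕜] E) ∘ₗ e.symm.symm) =
      Matrix.fromBlocks (a • 1) 0 0 (b • 1) := by
    ext (_ | _) (_ | _) <;>
    simp [LinearMap.toMatrix_apply, β, Matrix.one_apply, Finsupp.single_apply, e, eq_comm, hK]
  rw [← LinearMap.det_conj _ e.symm, ← LinearMap.det_toMatrix β, this,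
    Matrix.det_fromBlocks_zero₂₁, Matrix.det_smul, Matrix.det_smul]
  simp

end Determinant

section Normed

variable {F : Type*} [NormedAddCommGroup F] [NormedSpace ℝ F] {K : Set F}

theorem closedBall_smul_subset (hK : Convex ℝ K) (hB : closedBall 0 1 ⊆ K)
    {x : F} (hx : x ∈ K) {t : ℝ} (ht₀ : 0 ≤ t) (ht₁ : t < 1) :
    closedBall (t • x) (1 - t) ⊆ K := by
  intro z hz
  have h₁ : 0 < 1 - t := by linarith
  have hy : (1 - t)⁻¹ • (z - t • x) ∈ closedBall (0 : F) 1 := by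
    rw [mem_closedBall_zero_iff, norm_smul, norm_inv, Real.norm_of_nonneg h₁.le,
      inv_mul_le_iff₀ h₁, mul_one, ← dist_eq_norm]
    exact hz
  have := hK hx (hB hy) ht₀ h₁.le (by ring)
  rwa [smul_smul, mul_inv_cancel₀ h₁.ne', one_smul, add_sub_cancel] at this

def inscribedAffineMaps (K : Set F) : Set ((F →L[ℝ] F) × F) :=
  {q | MapsTo (fun v ↦ q.1 v + q.2) (closedBall 0 1) K}

theorem isClosed_inscribedAffineMaps (hK : IsClosed K) : IsClosed (inscribedAffineMaps K) := by
  simp only [inscribedAffineMaps, MapsTo, ofPred_forall]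
  exact isClosed_iInter fun v ↦ isClosed_iInter fun _ ↦ hK.preimage (by fun_prop)

theorem isBounded_inscribedAffineMaps (hK : Bornology.IsBounded K) :
    Bornology.IsBounded (inscribedAffineMaps K) := by
  obtain ⟨R, hR⟩ := hK.subset_closedBall 0
  refine isBounded_iff_forall_norm_le.mpr ⟨2 * R, fun q hq ↦ ?_⟩
  have hmem : ∀ v ∈ closedBall (0 : F) 1, ‖q.1 v + q.2‖ ≤ R := fun v hv ↦
    mem_closedBall_zero_iff.mp (hR (hq hv))
  have hp : ‖q.2‖ ≤ R := by simpa using hmem 0 (mem_closedBall_self zero_le_one)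
  have hA : ‖q.1‖ ≤ 2 * R := by
    refine ContinuousLinearMap.opNorm_le_of_unit_norm (by linarith [norm_nonneg q.2])
      fun v hv ↦ ?_
    calc ‖q.1 v‖ = ‖(q.1 v + q.2) - q.2‖ := by rw [add_sub_cancel_right]
      _ ≤ R + R := (norm_sub_le _ _).trans (add_le_add (hmem v (by simp [hv])) hp)
      _ = 2 * R := by ring
  rw [Prod.norm_def]
  exact max_le hA (by linarith [norm_nonneg q.2])

theorem exists_mem_inscribedAffineMaps_det_pos [FiniteDimensional ℝ F]
    (hK : (interior K).Nonempty) : ∃ q ∈ inscribedAffineMaps K, 0 < q.1.det := by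
  obtain ⟨x, hx⟩ := hK
  obtain ⟨ρ, hρ, hρK⟩ := nhds_basis_closedBall.mem_iff.mp (mem_interior_iff_mem_nhds.mp hx)
  refine ⟨(ρ • ContinuousLinearMap.id ℝ F, x), fun v hv ↦ hρK ?_, ?_⟩
  · rw [mem_closedBall_zero_iff] at hv
    simpa [norm_smul, abs_of_pos hρ] using mul_le_of_le_one_right hρ.le hv
  · simp [ContinuousLinearMap.det, LinearMap.det_smul, hρ]

theorem exists_isMaxOn_det_inscribedAffineMaps [FiniteDimensional ℝ F] (hK : IsCompact K)
    (hK' : (interior K).Nonempty) :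
    ∃ q ∈ inscribedAffineMaps K,
      0 < q.1.det ∧ IsMaxOn (fun q ↦ q.1.det) (inscribedAffineMaps K) q := by
  obtain ⟨q₀, hq₀, hq₀det⟩ := exists_mem_inscribedAffineMaps_det_pos hK'
  have hcpt : IsCompact (inscribedAffineMaps K) := Metric.isCompact_of_isClosed_isBounded
    (isClosed_inscribedAffineMaps hK.isClosed) (isBounded_inscribedAffineMaps hK.isBounded)
  obtain ⟨q, hq, hmax⟩ := hcpt.exists_isMaxOn ⟨q₀, hq₀⟩
    (ContinuousLinearMap.continuous_det.comp continuous_fst).continuousOn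
  exact ⟨q, hq, hq₀det.trans_le (hmax hq₀), hmax⟩

theorem addHaar_affineEquiv_image_closedBall [FiniteDimensional ℝ F] [MeasurableSpace F]
    [BorelSpace F] (μ : Measure F) [μ.IsAddHaarMeasure] (L : F ≃ᵃ[ℝ] F) {r : ℝ} (hr : 0 ≤ r) :
    μ (L '' closedBall 0 r) = ENNReal.ofReal (r ^ finrank ℝ F) * μ (L '' closedBall 0 1) := by
  have : L '' closedBall 0 r = AffineMap.homothety (L 0) r '' (L '' closedBall 0 1) := by
    rw [← smul_unitClosedBall_of_nonneg hr, ← image_smul, image_image, image_image]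
    refine image_congr fun v _ ↦ ?_
    rw [AffineMap.homothety_eq_lineMap, ← L.apply_lineMap]
    simp [AffineMap.lineMap_apply]
  rw [this, Measure.addHaar_image_homothety, abs_of_nonneg (by positivity)]

end Normed

/- For `v` in the unit ball with `⟪u, v⟫ = s`, the point `axialStretch u a √(1 - ε) v + (a - 1) • u`
has coordinate `a * s + a - 1` along `u` and squared distance at most `(1 - ε) * (1 - s ^ 2)`
from the line `ℝ ∙ u`. -/
section Scalar

variable {r ε a s : ℝ}

theorem sq_add_le_one_of_le_inv (hr : 1 < r) (hε : 0 < ε) (ha : 2 * (a - 1) = (r - 1) * ε)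
    (hs : |s| ≤ 1) (hX : a * s + a - 1 ≤ 1 / r) :
    (a * s + a - 1) ^ 2 + (1 - ε) * (1 - s ^ 2) ≤ 1 := by
  have hr₀ : 0 < r := by linarith
  have ha₁ : 1 < a := by nlinarith
  have hs₁ : 0 ≤ s + 1 := by linarith [neg_abs_le s]
  have hα : 0 < a ^ 2 - 1 + ε := by nlinarith
  have hfac : (a * s + a - 1) ^ 2 + (1 - ε) * (1 - s ^ 2) - 1
      = (s + 1) * ((a ^ 2 - 1 + ε) * s + (a - 1) ^ 2 - ε) := by ring
  have hrs : a * r * s ≤ 1 - (a - 1) * r := by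
    have := (le_div_iff₀ hr₀).mp hX
    nlinarith
  have hN : (a ^ 2 - 1 + ε) * (1 - (a - 1) * r) + a * r * ((a - 1) ^ 2 - ε)
      = -(ε ^ 2 * (r - 1) * (r + 1) ^ 2 / 4) := by
    linear_combination ((1 / 2) * ((1 - r) * (a - 1 + (r - 1) * ε / 2) + 2 * (1 - r * ε))) * ha
  have hlin : (a ^ 2 - 1 + ε) * s + (a - 1) ^ 2 - ε ≤ 0 := by
    refine nonpos_of_mul_nonpos_right (a := a * r) ?_ (by positivity)
    nlinarith [mul_le_mul_of_nonneg_left hrs hα.le, sq_nonneg ε]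
  linarith [mul_nonpos_of_nonneg_of_nonpos hs₁ hlin]

theorem mul_le_sq_sub_of_two_mul_sub_one_eq (ha : 2 * (a - 1) = (r - 1) * ε) :
    (r ^ 2 - 1) * ((1 - ε) * (1 - s ^ 2)) ≤ (r - (a * s + a - 1)) ^ 2 := by
  have : (r - (a * s + a - 1)) ^ 2 - (r ^ 2 - 1) * ((1 - ε) * (1 - s ^ 2))
      = ((r + 1 - a) * s - a) ^ 2 := by
    linear_combination (-(1 - s ^ 2) * (r + 1)) * ha
  nlinarith [sq_nonneg ((r + 1 - a) * s - a)]

theorem exists_one_lt_sq_mul_pow {n : ℕ} (hn : 1 ≤ n) (hr : (n : ℝ) < r) :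
    ∃ ε, 0 < ε ∧ ε < 1 ∧ 1 < (1 + (r - 1) * ε / 2) ^ 2 * (1 - ε) ^ (n - 1) := by
  have hn' : (1 : ℝ) ≤ n := by exact_mod_cast hn
  have hrn : 0 < r * n := by nlinarith
  set ε := (r - n) / (r * n)
  have hε : ε * (r * n) = r - n := div_mul_cancel₀ _ hrn.ne'
  have hε₀ : 0 < ε := div_pos (by linarith) hrn
  refine ⟨ε, hε₀, (div_lt_one hrn).2 (by nlinarith), ?_⟩
  have hbern : 1 - (n - 1) * ε ≤ (1 - ε) ^ (n - 1) := by
    have := one_add_mul_le_pow (a := -ε) (by nlinarith) (n - 1)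
    rw [Nat.cast_sub hn, Nat.cast_one, ← sub_eq_add_neg] at this
    linarith
  have hpos : 0 < 1 - (n - 1) * ε := by nlinarith
  have hprod : (1 + (r - 1) * ε) * (1 - (n - 1) * ε) = 1 + ε ^ 2 * (r + n - 1) := by
    linear_combination (-ε) * hε
  calc 1 < (1 + (r - 1) * ε) * (1 - (n - 1) * ε) := by rw [hprod]; nlinarith
    _ ≤ (1 + (r - 1) * ε / 2) ^ 2 * (1 - (n - 1) * ε) := by
      gcongr; nlinarith [sq_nonneg ((r - 1) * ε / 2)]
    _ ≤ _ := by gcongr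

end Scalar

section InnerProduct

variable {E : Type*} [NormedAddCommGroup E] [InnerProductSpace ℝ E]

noncomputable def axialStretch (u : E) (a b : ℝ) : E →L[ℝ] E :=
  a • (ℝ ∙ u).starProjection + b • (ℝ ∙ u)ᗮ.starProjection

theorem axialStretch_apply {u : E} (hu : ‖u‖ = 1) (a b : ℝ) (v : E) :
    axialStretch u a b v = (a * ⟪u, v⟫) • u + b • (v - ⟪u, v⟫ • u) := by
  simp [axialStretch, Submodule.starProjection_singleton, hu, mul_smul]

theorem det_axialStretch [FiniteDimensional ℝ E] {u : E} (hu : u ≠ 0) (a b : ℝ) :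
    (axialStretch u a b).det = a * b ^ (finrank ℝ E - 1) := by
  have h := (ℝ ∙ u).finrank_add_finrank_orthogonal
  rw [finrank_span_singleton hu] at h
  rw [ContinuousLinearMap.det, axialStretch,
    Submodule.det_smul_starProjection_add_smul_starProjection_orthogonal,
    finrank_span_singleton hu, pow_one, ← h, Nat.add_sub_cancel_left]

theorem norm_smul_add_sq {u w : E} (hu : ‖u‖ = 1) (huw : ⟪u, w⟫ = 0) (X : ℝ) :
    ‖X • u + w‖ ^ 2 = X ^ 2 + ‖w‖ ^ 2 := by
  rw [norm_add_sq_real, real_inner_smul_left, huw, norm_smul, hu, Real.norm_eq_abs, mul_one,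
    sq_abs, mul_zero, mul_zero, add_zero]

theorem smul_add_mem_of_sq_norm_le {K : Set E} (hK : Convex ℝ K) (hB : closedBall 0 1 ⊆ K)
    {u w : E} (hu : ‖u‖ = 1) (huw : ⟪u, w⟫ = 0) {r X : ℝ} (hr : 1 < r) (hx : r • u ∈ K)
    (hX₁ : 1 / r < X) (hX₂ : X < r) (hw : (r ^ 2 - 1) * ‖w‖ ^ 2 ≤ (r - X) ^ 2) :
    X • u + w ∈ K := by
  have hr₂ : 0 < r ^ 2 - 1 := by nlinarith
  have hrX : 1 < r * X := by rwa [div_lt_iff₀ (by linarith), mul_comm] at hX₁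
  set t := (r * X - 1) / (r ^ 2 - 1)
  have ht₀ : 0 ≤ t := div_nonneg (by linarith) hr₂.le
  have ht₁ : t < 1 := by rw [div_lt_one hr₂]; nlinarith
  -- Of the balls `closedBall (t • r • u) (1 - t)` filling the cone `conv (B ∪ {r • u})`,
  -- this one is the widest in the slice at height `X` along `u`.
  have key : (1 - t) ^ 2 - (X - t * r) ^ 2 = (r - X) ^ 2 / (r ^ 2 - 1) := by
    simp only [t]
    field_simp
    ring
  refine closedBall_smul_subset hK hB hx ht₀ ht₁ ?_
  rw [mem_closedBall, dist_eq_norm, smul_smul, add_sub_right_comm, ← sub_smul]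
  refine (pow_le_pow_iff_left₀ (norm_nonneg _) (by linarith) two_ne_zero).mp ?_
  rw [norm_smul_add_sq hu huw]
  have : ‖w‖ ^ 2 ≤ (r - X) ^ 2 / (r ^ 2 - 1) := by rw [le_div_iff₀ hr₂]; linarith
  linarith

/-- The image of `B` is an ellipsoid touching the unit sphere at `-u` and tangent to the cone
`conv (B ∪ {r • u})`. -/
theorem mapsTo_axialStretch_add {K : Set E} (hK : Convex ℝ K) (hB : closedBall 0 1 ⊆ K)
    {u : E} (hu : ‖u‖ = 1) {r ε a : ℝ} (hr : 1 < r) (hx : r • u ∈ K) (hε₀ : 0 < ε) (hε₁ : ε < 1)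
    (ha : 2 * (a - 1) = (r - 1) * ε) :
    MapsTo (fun v ↦ axialStretch u a √(1 - ε) v + (a - 1) • u) (closedBall 0 1) K := by
  intro v hv
  set s := ⟪u, v⟫
  set w := v - s • u
  set X := a * s + a - 1 with hX_def
  have hb : √(1 - ε) ^ 2 = 1 - ε := Real.sq_sqrt (by linarith)
  have huw : ⟪u, w⟫ = 0 := by
    rw [inner_sub_right, real_inner_smul_right, real_inner_self_eq_norm_sq, hu]; ring
  have hw : ‖w‖ ^ 2 ≤ 1 - s ^ 2 := by
    have hv' : ‖s • u + w‖ ^ 2 ≤ 1 := by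
      rw [add_sub_cancel]; exact pow_le_one₀ (norm_nonneg v) (mem_closedBall_zero_iff.mp hv)
    rw [norm_smul_add_sq hu huw] at hv'
    linarith
  have hs : |s| ≤ 1 := (sq_le_one_iff_abs_le_one s).mp (by nlinarith [sq_nonneg ‖w‖])
  have hbw : (1 - ε) * ‖w‖ ^ 2 ≤ (1 - ε) * (1 - s ^ 2) := by gcongr
  have huw' : ⟪u, √(1 - ε) • w⟫ = 0 := by rw [real_inner_smul_right, huw, mul_zero]
  have hnorm : ‖√(1 - ε) • w‖ ^ 2 = (1 - ε) * ‖w‖ ^ 2 := by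
    rw [norm_smul, mul_pow, Real.norm_eq_abs, sq_abs, hb]
  have hz : axialStretch u a √(1 - ε) v + (a - 1) • u = X • u + √(1 - ε) • w := by
    rw [axialStretch_apply hu]; module
  beta_reduce
  rw [hz]
  by_cases hX : X ≤ 1 / r
  · apply hB
    rw [mem_closedBall_zero_iff, ← sq_le_one_iff₀ (norm_nonneg _), norm_smul_add_sq hu huw',
      hnorm]
    linarith [sq_add_le_one_of_le_inv hr hε₀ ha hs hX]
  · refine smul_add_mem_of_sq_norm_le hK hB hu huw' hr hx (not_le.mp hX) ?_ ?_
    · have ha₁ : 1 < a := by nlinarith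
      have : X ≤ 2 * a - 1 := by nlinarith [abs_le.mp hs]
      nlinarith
    · have hr₂ : 0 ≤ r ^ 2 - 1 := by nlinarith
      rw [hnorm, hX_def]
      nlinarith [mul_le_sq_sub_of_two_mul_sub_one_eq (s := s) ha,
        mul_le_mul_of_nonneg_left hbw hr₂]

theorem exists_mapsTo_closedBall_one_lt_det [FiniteDimensional ℝ E] {K : Set E}
    (hK : Convex ℝ K) (hB : closedBall 0 1 ⊆ K) {x : E} (hx : x ∈ K)
    (hxn : (finrank ℝ E : ℝ) < ‖x‖) :
    ∃ (T : E →L[ℝ] E) (p : E), MapsTo (fun v ↦ T v + p) (closedBall 0 1) K ∧ 1 < T.det := by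
  have hx₀ : x ≠ 0 := norm_pos_iff.mp ((Nat.cast_nonneg _).trans_lt hxn)
  have : Nontrivial E := ⟨x, 0, hx₀⟩
  have hn : 1 ≤ finrank ℝ E := finrank_pos
  have hr : 1 < ‖x‖ := lt_of_le_of_lt (by exact_mod_cast hn) hxn
  obtain ⟨ε, hε₀, hε₁, hgain⟩ := exists_one_lt_sq_mul_pow hn hxn
  set u := ‖x‖⁻¹ • x
  have hu : ‖u‖ = 1 := norm_smul_inv_norm hx₀
  have hxu : ‖x‖ • u = x := smul_inv_smul₀ (norm_ne_zero_iff.mpr hx₀) x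
  refine ⟨axialStretch u (1 + (‖x‖ - 1) * ε / 2) √(1 - ε), (1 + (‖x‖ - 1) * ε / 2 - 1) • u,
    mapsTo_axialStretch_add hK hB hu hr (hxu.symm ▸ hx) hε₀ hε₁ (by ring), ?_⟩
  rw [det_axialStretch (ne_zero_of_norm_ne_zero (by simp [hu]))]
  refine lt_of_pow_lt_pow_left₀ 2 (by positivity) ?_
  rwa [one_pow, mul_pow, ← pow_mul, mul_comm _ 2, pow_mul, Real.sq_sqrt (by linarith)]

theorem exists_affineEquiv_image_closedBall_subset_subset [FiniteDimensional ℝ E] {K : Set E}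
    (hKc : Convex ℝ K) (hK : IsCompact K) (hK' : (interior K).Nonempty) :
    ∃ L : E ≃ᵃ[ℝ] E, L '' closedBall 0 1 ⊆ K ∧ K ⊆ L '' closedBall 0 (finrank ℝ E) := by
  obtain ⟨⟨A, p⟩, hAp, hdet, hmax⟩ := exists_isMaxOn_det_inscribedAffineMaps hK hK'
  let L : E ≃ᵃ[ℝ] E :=
    (LinearMap.equivOfDetNeZero (A : E →ₗ[ℝ] E) hdet.ne').toAffineEquiv.trans
      (AffineEquiv.constVAdd ℝ E p)
  have hL : ∀ v, L v = A v + p := fun v ↦ add_comm _ _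
  refine ⟨L, ?_, fun z hz ↦ ?_⟩
  · rintro _ ⟨v, hv, rfl⟩
    rw [hL]
    exact hAp hv
  by_contra hzL
  have hn : (finrank ℝ E : ℝ) < ‖L.symm z‖ := by
    by_contra! h
    exact hzL ⟨L.symm z, mem_closedBall_zero_iff.mpr h, L.apply_symm_apply z⟩
  obtain ⟨T, q, hTq, hT⟩ := exists_mapsTo_closedBall_one_lt_det
    (hKc.affine_preimage (L : E →ᵃ[ℝ] E)) (fun v hv ↦ show L v ∈ K by rw [hL]; exact hAp hv)
    (show L (L.symm z) ∈ K by rwa [L.apply_symm_apply]) hn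
  have hAT : (A ∘L T, A q + p) ∈ inscribedAffineMaps K := fun v hv ↦ by
    simpa [hL, add_assoc] using hTq hv
  have h : (A ∘L T).det ≤ A.det := hmax hAT
  rw [ContinuousLinearMap.det, ContinuousLinearMap.toLinearMap_comp, LinearMap.det_comp] at h
  nlinarith

end InnerProduct

/-- Every convex body `K ⊆ ℝ^d` contains an ellipsoid of volume at least
`d^(-d) · Vol(K)`. -/
theorem exists_large_ellipsoid_in_convex_body {d : ℕ}
    (K : Set (EuclideanSpace ℝ (Fin d))) (hK : IsConvexBody K) :
    ∃ E, IsEllipsoid E ∧ E ⊆ K ∧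
      ENNReal.ofReal ((d : ℝ) ^ (-(d : ℝ))) * volume K ≤ volume E := by
  obtain ⟨hconv, hcpt, hint⟩ := hK
  obtain ⟨L, hLK, hKL⟩ := exists_affineEquiv_image_closedBall_subset_subset hconv hcpt hint
  rw [finrank_euclideanSpace_fin] at hKL
  refine ⟨L '' closedBall 0 1, ⟨L, rfl⟩, hLK, ?_⟩
  have hd : (0 : ℝ) < (d : ℝ) ^ d := by exact_mod_cast Nat.pow_self_pos
  calc ENNReal.ofReal ((d : ℝ) ^ (-(d : ℝ))) * volume K
      ≤ ENNReal.ofReal ((d : ℝ) ^ (-(d : ℝ))) * volume (L '' closedBall 0 d) := by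
        gcongr
    _ = ENNReal.ofReal (((d : ℝ) ^ d)⁻¹ * (d : ℝ) ^ d) * volume (L '' closedBall 0 1) := by
        rw [addHaar_affineEquiv_image_closedBall volume L (Nat.cast_nonneg d), ← mul_assoc,
          ← ENNReal.ofReal_mul (by positivity), Real.rpow_neg (Nat.cast_nonneg d),
          Real.rpow_natCast, finrank_euclideanSpace_fin]
    _ = volume (L '' closedBall 0 1) := by rw [inv_mul_cancel₀ hd.ne', ENNReal.ofReal_one, one_mul]
end
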